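/- Let X be a real Hilbert space, let A be a nonempty closed affine subspace of X with parallel subspace U := A − A, and let B := {x ∈ X : ⟨x, v⟩ = β} be a hyperplane with ‖v‖ = 1. Suppose P_U(v) ≠ 0, and define Q : X → X by Q(x) := P_A(x) + ((β − ⟨P_A(x), v⟩)/‖P_U(v)‖²) · P_U(v). Then Q(x) ∈ A ∩ B for every x ∈ X; in particular, A ∩ B ≠ ∅. -/

import Mathlib

open RealInnerProductSpace Pointwise

/-- The metric (nearest-point) projection onto a set `C` in a real inner product space:
`metricProj C x` is a point of `C` minimizing the distance to `x` (when such a point exists;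
for a nonempty closed convex set in a Hilbert space it exists and is unique). -/
noncomputable def metricProj {X : Type*} [NormedAddCommGroup X] [InnerProductSpace ℝ X]
    (C : Set X) (x : X) : X :=
  letI := Classical.dec (∃ p ∈ C, ∀ q ∈ C, ‖x - p‖ ≤ ‖x - q‖)
  if h : ∃ p ∈ C, ∀ q ∈ C, ‖x - p‖ ≤ ‖x - q‖ then h.choose else 0

lemma metricProj_spec {X : Type*} [NormedAddCommGroup X] [InnerProductSpace ℝ X]
    [CompleteSpace X] {C : Set X} (hne : C.Nonempty) (hc : IsClosed C) (hconv : Convex ℝ C)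
    (x : X) : metricProj C x ∈ C ∧ ∀ q ∈ C, ‖x - metricProj C x‖ ≤ ‖x - q‖ := by
  have hex : ∃ p ∈ C, ∀ q ∈ C, ‖x - p‖ ≤ ‖x - q‖ := by
    obtain ⟨p, hp, hpe⟩ := exists_norm_eq_iInf_of_complete_convex hne
      (hc.isComplete) hconv x
    refine ⟨p, hp, fun q hq => ?_⟩
    rw [hpe]
    exact ciInf_le ⟨0, Set.forall_mem_range.2 fun _ => norm_nonneg _⟩ (⟨q, hq⟩ : C)
  have : metricProj C x = hex.choose := by
    simp only [metricProj]
    rw [dif_pos hex]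
  rw [this]
  exact ⟨hex.choose_spec.1, hex.choose_spec.2⟩

theorem Q_mem_inter_of_projDir_ne_zero
    {X : Type*} [NormedAddCommGroup X] [InnerProductSpace ℝ X] [CompleteSpace X]
    (A : AffineSubspace ℝ X) (hA : (A : Set X).Nonempty) (hAc : IsClosed (A : Set X))
    (v : X) (hv : ‖v‖ = 1) (β : ℝ) (B : Set X) (hB : B = {y : X | ⟪y, v⟫ = β})
    (hPU : metricProj (A.direction : Set X) v ≠ 0)
    (Q : X → X)
    (hQ : ∀ x, Q x
      = metricProj (A : Set X) x
        + ((β - ⟪metricProj (A : Set X) x, v⟫) / ‖metricProj (A.direction : Set X) v‖ ^ 2)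
            • metricProj (A.direction : Set X) v) :
    (∀ x, Q x ∈ (A : Set X) ∩ B) ∧ ((A : Set X) ∩ B).Nonempty := by
  set U := A.direction
  set p := metricProj (U : Set X) v with hp
  have hUc : IsClosed (U : Set X) := (A.isClosed_direction_iff).2 hAc
  have hUspec := metricProj_spec ⟨0, U.zero_mem⟩ hUc U.convex v
  have hpU : p ∈ U := hUspec.1
  -- p is the orthogonal projection of v onto U
  have hinf : ‖v - p‖ = ⨅ w : (U : Set X), ‖v - w‖ := by
    refine le_antisymm (le_ciInf fun w => hUspec.2 w w.2) ?_
    exact ciInf_le ⟨0, Set.forall_mem_range.2 fun _ => norm_nonneg _⟩ (⟨p, hpU⟩ : (U : Set X))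
  have horth : ∀ w ∈ U, ⟪v - p, w⟫ = 0 :=
    (Submodule.norm_eq_iInf_iff_real_inner_eq_zero U hpU).1 hinf
  have hpv : ⟪p, v⟫ = ‖p‖ ^ 2 := by
    have h := horth p hpU
    rw [inner_sub_left] at h
    have : ⟪p, v⟫ = ⟪v, p⟫ := real_inner_comm _ _
    rw [this]
    rw [real_inner_self_eq_norm_sq] at h
    linarith
  have hnp : ‖p‖ ^ 2 ≠ 0 := by
    simpa using hPU
  have key : ∀ x, Q x ∈ (A : Set X) ∩ B := by
    intro x
    set a := metricProj (A : Set X) x with ha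
    have haA : a ∈ A := (metricProj_spec hA hAc (A.convex) x).1
    have hQx : Q x = a + ((β - ⟪a, v⟫) / ‖p‖ ^ 2) • p := hQ x
    constructor
    · rw [hQx, add_comm]
      exact A.vadd_mem_of_mem_direction (U.smul_mem _ hpU) haA
    · rw [hB, hQx]
      simp only [Set.mem_setOf_eq, inner_add_left, real_inner_smul_left, hpv]
      field_simp
      ring
  exact ⟨key, ⟨Q hA.choose, key hA.choose⟩⟩
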